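/- Let $\sigma, \tau, \beta > 0$ and let $C \in \mathbb{R}^{m\times m}$ be the lower bidiagonal matrix with $1$ on the diagonal and $-1$ on the subdiagonal. Then the block matrix $B = \begin{pmatrix} \frac{\sigma}{\tau} C^T & \frac{1}{\sqrt{\beta}} I_m \\ -\frac{1}{\sqrt{\beta}} I_m & \frac{\sigma}{\tau} C \end{pmatrix}$ is invertible. -/

import Mathlib

open Matrix

/-- The lower bidiagonal matrix with `1` on the diagonal and `-1` on the subdiagonal. -/
def bidiagC (m : ℕ) : Matrix (Fin m) (Fin m) ℝ :=
  Matrix.of fun i j => if i = j then 1 else if (i : ℕ) = (j : ℕ) + 1 then -1 else 0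

lemma psd_smul {n : Type*} [Fintype n] {A : Matrix n n ℝ} (hA : A.PosSemidef) {r : ℝ}
    (hr : 0 ≤ r) : (r • A).PosSemidef := by
  refine ⟨?_, fun x => ?_⟩
  · unfold Matrix.IsHermitian
    rw [conjTranspose_smul, hA.1]
    simp
  · exact (hA.smul hr).2 x

/-- The block matrix `B = [[ (σ/τ)Cᵀ, (1/√β)I ], [ -(1/√β)I, (σ/τ)C ]]` is invertible. -/
theorem blockB_isUnit {m : ℕ} (σ τ β : ℝ) (hσ : 0 < σ) (hτ : 0 < τ) (hβ : 0 < β) :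
    IsUnit
      (Matrix.fromBlocks ((σ / τ) • (bidiagC m)ᵀ)
        ((Real.sqrt β)⁻¹ • (1 : Matrix (Fin m) (Fin m) ℝ))
        (-((Real.sqrt β)⁻¹ • (1 : Matrix (Fin m) (Fin m) ℝ)))
        ((σ / τ) • bidiagC m)) := by
  set c : ℝ := (Real.sqrt β)⁻¹ with hc_def
  set s : ℝ := σ / τ with hs_def
  have hs : 0 < s := div_pos hσ hτ
  have hc : 0 < c := inv_pos.mpr (Real.sqrt_pos.mpr hβ)
  set C : Matrix (Fin m) (Fin m) ℝ := bidiagC m with hC_def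
  have hCtri : C.BlockTriangular OrderDual.toDual := by
    intro i j hij
    have hij' : (i : ℕ) < (j : ℕ) := hij
    simp only [hC_def, bidiagC, of_apply]
    rw [if_neg, if_neg] <;> omega
  have hdetC : C.det = 1 := by
    rw [det_of_lowerTriangular _ hCtri]
    simp [hC_def, bidiagC]
  have hdetD : (s • C).det = s ^ m := by
    rw [det_smul, hdetC, mul_one, Fintype.card_fin]
  have hD : IsUnit (s • C).det := by
    rw [hdetD]
    exact (pow_ne_zero m hs.ne').isUnit
  haveI : Invertible (s • C) := (s • C).invertibleOfIsUnitDet hD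
  rw [Matrix.isUnit_iff_isUnit_det, det_fromBlocks₂₂]
  set S : Matrix (Fin m) (Fin m) ℝ :=
    s • Cᵀ - c • (1 : Matrix (Fin m) (Fin m) ℝ) * ⅟(s • C) * -(c • 1) with hS_def
  have key : S * (s • C) = (s ^ 2) • (Cᵀ * C) + (c ^ 2) • 1 := by
    have h2 : ∀ (D : Matrix (Fin m) (Fin m) ℝ) (_ : Invertible D),
        c • (1 : Matrix (Fin m) (Fin m) ℝ) * ⅟D * -(c • 1) * D
        = -((c ^ 2) • (1 : Matrix (Fin m) (Fin m) ℝ)) := by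
      intro D hDi
      simp only [Matrix.smul_mul, Matrix.one_mul, Matrix.mul_neg, Matrix.mul_smul,
        Matrix.mul_one, Matrix.neg_mul, invOf_mul_self, smul_smul, ← sq]
    rw [hS_def, Matrix.sub_mul, h2 (s • C) inferInstance, sub_neg_eq_add, Matrix.smul_mul, Matrix.mul_smul,
      smul_smul, ← sq]
  have hpsd : ((s ^ 2) • (Cᵀ * C)).PosSemidef := by
    have : (Cᵀ * C).PosSemidef := by
      have := Matrix.posSemidef_conjTranspose_mul_self C
      rwa [conjTranspose_eq_transpose_of_trivial] at this
    exact psd_smul this (sq_nonneg s)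
  have hpd : ((c ^ 2) • (1 : Matrix (Fin m) (Fin m) ℝ)).PosDef := by
    have h1 : (c ^ 2) • (1 : Matrix (Fin m) (Fin m) ℝ) =
        Matrix.diagonal (fun _ => c ^ 2) := by
      ext i j
      by_cases h : i = j <;> simp [Matrix.one_apply, Matrix.diagonal, h]
    rw [h1]
    exact Matrix.posDef_diagonal_iff.mpr fun _ => pow_pos hc 2
  have hsum : ((s ^ 2) • (Cᵀ * C) + (c ^ 2) • 1).PosDef :=
    Matrix.PosDef.posSemidef_add hpsd hpd
  have hdet_pos : 0 < (S * (s • C)).det := by rw [key]; exact hsum.det_pos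
  have hSdet : S.det ≠ 0 := by
    intro h
    rw [det_mul, h, zero_mul] at hdet_pos
    exact lt_irrefl _ hdet_pos
  exact hD.mul (isUnit_iff_ne_zero.mpr hSdet)
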